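/- arXiv:1302.1464 — 3 statements merged into one kernel-verified Lean document; each statement's English description precedes it below -/
import Mathlib

section
/- Let $\mathcal{O}$ be a commutative ring and let $a,b,c,d,e,f,g,h,i \in \mathcal{O}$. Suppose $z,w$ are elements of an $\mathcal{O}$-algebra which is free as an $\mathcal{O}$-module with basis $\{1,z,w\}$, satisfying $z^2 = g + az + bw$, $zw = h + ez + fw$, and $w^2 = i + cz + dw$. Then $g = be + f^2 - af - bd$, $h = bc - ef$, and $i = e^2 + cf - ac - de$. -/
/-!
The relations come from associativity of the multiplication: expanding `z * (z * w) = w * z ^ 2`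
and `w * (z * w) = z * w ^ 2` in the basis `{1, z, w}` with the multiplication table and comparing
the coefficients of `w` and `z` in the first and of `z` in the second gives the three formulas.
-/

theorem LinearIndependent.eq_of_fin_three {R M : Type*} [Semiring R] [AddCommMonoid M]
    [Module R M] {v : Fin 3 → M} (hv : LinearIndependent R v) {p q r p' q' r' : R}
    (h : p • v 0 + q • v 1 + r • v 2 = p' • v 0 + q' • v 1 + r' • v 2) :
    p = p' ∧ q = q' ∧ r = r' := by
  have hcoeff := Fintype.linearIndependent_iffₛ.1 hv ![p, q, r] ![p', q', r']
    (by simpa only [Fin.sum_univ_three, Matrix.cons_val] using h)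
  exact ⟨hcoeff 0, hcoeff 1, hcoeff 2⟩

namespace TripleCover

variable {O A : Type*} [CommRing O] [CommRing A] [Algebra O A] {z w : A} {a b c d e f g h i : O}

theorem algebraMap_add_smul_add_smul_injective (B : Module.Basis (Fin 3) O A)
    (hB0 : B 0 = 1) (hB1 : B 1 = z) (hB2 : B 2 = w) {p q r p' q' r' : O}
    (heq : algebraMap O A p + q • z + r • w = algebraMap O A p' + q' • z + r' • w) :
    p = p' ∧ q = q' ∧ r = r' := by
  refine B.linearIndependent.eq_of_fin_three ?_
  simpa only [hB0, hB1, hB2, Algebra.algebraMap_eq_smul_one] using heq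

variable (hz2 : z ^ 2 = algebraMap O A g + a • z + b • w)
  (hzw : z * w = algebraMap O A h + e • z + f • w)
  (hw2 : w ^ 2 = algebraMap O A i + c • z + d • w)
include hz2 hzw hw2

/-- `z * (z * w) = w * z ^ 2`, both sides expanded with the multiplication table. -/
theorem expand_z_mul_z_mul_w :
    algebraMap O A (e * g + f * h) + (h + a * e + e * f) • z + (b * e + f ^ 2) • w =
      algebraMap O A (a * h + b * i) + (a * e + b * c) • z + (g + a * f + b * d) • w := by
  simp only [Algebra.smul_def, map_add, map_mul, map_pow] at hz2 hzw hw2 ⊢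
  linear_combination (w - algebraMap O A e) * hz2 + (algebraMap O A a - algebraMap O A f - z) * hzw
    + algebraMap O A b * hw2

/-- `w * (z * w) = z * w ^ 2`, both sides expanded with the multiplication table. -/
theorem expand_w_mul_z_mul_w :
    algebraMap O A (e * h + f * i) + (e ^ 2 + c * f) • z + (h + e * f + d * f) • w =
      algebraMap O A (c * g + d * h) + (i + a * c + d * e) • z + (b * c + d * f) • w := by
  simp only [Algebra.smul_def, map_add, map_mul, map_pow] at hz2 hzw hw2 ⊢
  linear_combination algebraMap O A c * hz2 + (algebraMap O A d - algebraMap O A e - w) * hzw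
    + (z - algebraMap O A f) * hw2

end TripleCover

open TripleCover in
theorem stmt_0 (O : Type*) [CommRing O] (A : Type*) [CommRing A] [Algebra O A]
    (B : Module.Basis (Fin 3) O A) (z w : A) (a b c d e f g h i : O)
    (hB0 : B 0 = 1) (hB1 : B 1 = z) (hB2 : B 2 = w)
    (hz2 : z ^ 2 = algebraMap O A g + a • z + b • w)
    (hzw : z * w = algebraMap O A h + e • z + f • w)
    (hw2 : w ^ 2 = algebraMap O A i + c • z + d • w) :
    g = b * e + f ^ 2 - a * f - b * d ∧ h = b * c - e * f ∧
      i = e ^ 2 + c * f - a * c - d * e := by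
  obtain ⟨-, hz_left, hw_left⟩ := algebraMap_add_smul_add_smul_injective B hB0 hB1 hB2
    (expand_z_mul_z_mul_w hz2 hzw hw2)
  obtain ⟨-, hz_right, -⟩ := algebraMap_add_smul_add_smul_injective B hB0 hB1 hB2
    (expand_w_mul_z_mul_w hz2 hzw hw2)
  exact ⟨by linear_combination -hw_left, by linear_combination hz_left,
    by linear_combination -hz_right⟩
end

section
/- Let $R$ be a commutative ring and $a,b,c,d \in R$. Let $F = z^2 - 2(a^2-bd) - az - bw$, $G = zw + (ad-bc) + dz + aw$, $H = w^2 - 2(d^2-ac) - cz - dw$ in $R[z,w]$. Then the polynomial $z^3 + 3(bd - a^2)z + (3abd - 2a^3 - b^2c)$ lies in the ideal of $R[z,w]$ generated by $F$, $G$, and $H$. -/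
open MvPolynomial

theorem stmt_4 (R : Type*) [CommRing R] (a b c d : R) :
    let z : MvPolynomial (Fin 2) R := X 0
    let w : MvPolynomial (Fin 2) R := X 1
    let F := z ^ 2 - C (2 * (a ^ 2 - b * d)) - C a * z - C b * w
    let G := z * w + C (a * d - b * c) + C d * z + C a * w
    let H := w ^ 2 - C (2 * (d ^ 2 - a * c)) - C c * z - C d * w
    z ^ 3 + C (3 * (b * d - a ^ 2)) * z + C (3 * a * b * d - 2 * a ^ 3 - b ^ 2 * c) ∈
      Ideal.span {F, G, H} := by
  intro z w F G H
  -- The `w`-terms `-b (z + a) w` of `(z + a) F` are cancelled by those of `b G`.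
  have eliminate_w : (z + C a) * F + C b * G =
      z ^ 3 + C (3 * (b * d - a ^ 2)) * z + C (3 * a * b * d - 2 * a ^ 3 - b ^ 2 * c) := by
    simp only [F, G, C_mul, C_sub, C_pow, map_ofNat]
    ring
  have span_pair_le : Ideal.span {F, G} ≤ Ideal.span {F, G, H} :=
    Ideal.span_mono (Set.insert_subset_insert (Set.singleton_subset_iff.mpr (by simp)))
  exact span_pair_le (Ideal.mem_span_pair.mpr ⟨z + C a, C b, eliminate_w⟩)
end

section
/- The polynomial $z^3 + y^5 + x^2 y^2 \in \mathbb{C}[x,y,z]$ is Newton non-degenerate: for every compact face $F$ of its Newton polygon, the face function $\sum_{v \in F} a_v \mathbf{z}^v$ has no common zero with all of its partial derivatives in the torus $(\mathbb{C}^*)^3$. -/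
/-!
Every compact face of the Newton polygon is nonempty, and its face function is supported on
exponents of `f`, so it has the form `a z³ + b y⁵ + c x²y²` with `(a, b, c) ≠ 0`. At a critical
point in the torus, `∂ₓ = 2c x y²` forces `c = 0`, then `∂_y = 5b y⁴` forces `b = 0`, and finally
the face function itself is `a z³`, forcing `a = 0`.
-/

open MvPolynomial

namespace MvPolynomial

variable {σ R : Type*} [CommSemiring R]

theorem coeff_sum_monomial_coeff [DecidableEq σ] (S : Finset (σ →₀ ℕ)) (f : MvPolynomial σ R)
    (v : σ →₀ ℕ) :
    coeff v (∑ w ∈ S, monomial w (coeff w f)) = if v ∈ S then coeff v f else 0 := by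
  simp [coeff_sum, coeff_monomial]

theorem support_sum_monomial_coeff_subset (S : Finset (σ →₀ ℕ)) (f : MvPolynomial σ R) :
    (∑ w ∈ S, monomial w (coeff w f)).support ⊆ S := by
  classical
  intro v hv
  rw [mem_support_iff, coeff_sum_monomial_coeff] at hv
  by_contra hvS
  exact hv (if_neg hvS)

theorem eq_sum_monomial_of_support_subset {f : MvPolynomial σ R} {S : Finset (σ →₀ ℕ)}
    (h : f.support ⊆ S) : f = ∑ v ∈ S, monomial v (coeff v f) := by
  conv_lhs => rw [f.as_sum]
  exact Finset.sum_subset h fun v _ hv => by rw [notMem_support_iff.mp hv, monomial_zero]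

end MvPolynomial

theorem exists_eq_of_support_subset {K : Type*} [CommSemiring K] {g : MvPolynomial (Fin 3) K}
    (h : g.support ⊆ (X 2 ^ 3 + X 1 ^ 5 + X 0 ^ 2 * X 1 ^ 2 : MvPolynomial (Fin 3) K).support) :
    ∃ a b c : K, g = C a * X 2 ^ 3 + C b * X 1 ^ 5 + C c * (X 0 ^ 2 * X 1 ^ 2) := by
  classical
  simp only [X_pow_eq_monomial, monomial_mul, one_mul] at h ⊢
  have hexp : (monomial (Finsupp.single (2 : Fin 3) 3) (1 : K) + monomial (Finsupp.single 1 5) 1 +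
      monomial (Finsupp.single 0 2 + Finsupp.single 1 2) 1).support ⊆
      {Finsupp.single 2 3, Finsupp.single 1 5, Finsupp.single 0 2 + Finsupp.single 1 2} := by
    refine support_add.trans (Finset.union_subset (support_add.trans
      (Finset.union_subset ?_ ?_)) ?_) <;> exact support_monomial_subset.trans (by simp)
  refine ⟨coeff (Finsupp.single 2 3) g, coeff (Finsupp.single 1 5) g,
    coeff (Finsupp.single 0 2 + Finsupp.single 1 2) g,
    (eq_sum_monomial_of_support_subset (h.trans hexp)).trans ?_⟩
  rw [Finset.sum_insert (by simp [Finsupp.ext_iff, Fin.forall_fin_succ]),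
    Finset.sum_insert (by simp [Finsupp.ext_iff, Fin.forall_fin_succ]), Finset.sum_singleton]
  simp only [C_mul_monomial, mul_one, add_assoc]

theorem eq_zero_of_isCritical {K : Type*} [CommRing K] [IsDomain K] [CharZero K] {a b c : K}
    {p : Fin 3 → K} (hp : ∀ i, p i ≠ 0) {g : MvPolynomial (Fin 3) K}
    (hg : g = C a * X 2 ^ 3 + C b * X 1 ^ 5 + C c * (X 0 ^ 2 * X 1 ^ 2))
    (hzero : eval p g = 0) (hcrit : ∀ i, eval p (pderiv i g) = 0) : g = 0 := by
  subst hg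
  have hc : c = 0 := by simpa [pderiv_X, hp] using hcrit 0
  have hb : b = 0 := by simpa [pderiv_X, hc, hp] using hcrit 1
  have ha : a = 0 := by simpa [hb, hc, hp] using hzero
  simp [ha, hb, hc]

/-- Newton non-degeneracy of `z^3 + y^5 + x^2 y^2`: for every strictly positive
weight vector `u` (these are exactly the normals of the compact faces of the
Newton polygon), the face function of the corresponding face has no common zero
with all of its partial derivatives in the torus `(ℂ*)^3`. -/
theorem stmt_9 :
    let f : MvPolynomial (Fin 3) ℂ := X 2 ^ 3 + X 1 ^ 5 + X 0 ^ 2 * X 1 ^ 2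
    ∀ u : Fin 3 → ℝ, (∀ i, 0 < u i) →
      ∀ m : ℝ,
        (∀ v ∈ f.support, m ≤ ∑ i, u i * (v i : ℝ)) →
        (∃ v ∈ f.support, (∑ i, u i * (v i : ℝ)) = m) →
        let faceFun : MvPolynomial (Fin 3) ℂ :=
          ∑ v ∈ f.support.filter (fun v => (∑ i, u i * (v i : ℝ)) = m),
            monomial v (coeff v f)
        ¬ ∃ p : Fin 3 → ℂ, (∀ i, p i ≠ 0) ∧ eval p faceFun = 0 ∧
            ∀ i, eval p (pderiv i faceFun) = 0 := by
  intro f u _ m _ ⟨v₀, hv₀, hv₀m⟩ faceFun ⟨p, hp, hzero, hcrit⟩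
  have hsupp : faceFun.support ⊆ f.support :=
    (support_sum_monomial_coeff_subset _ f).trans (Finset.filter_subset _ _)
  have hne : faceFun ≠ 0 := by
    intro h
    have hcoeff := congrArg (coeff v₀) h
    rw [coeff_sum_monomial_coeff, if_pos (Finset.mem_filter.2 ⟨hv₀, hv₀m⟩)] at hcoeff
    exact mem_support_iff.1 hv₀ hcoeff
  obtain ⟨a, b, c, hg⟩ := exists_eq_of_support_subset hsupp
  exact hne (eq_zero_of_isCritical hp hg hzero hcrit)
end
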